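/- Let (G,Γ₁,Γ₂) be a boundary triple for S. Then for every non-real complex number z, the restriction of Γ₁ to the deficiency space N_z = ker(S* − z) is a bijection from N_z onto G. -/

import Mathlib

/-!
Let `H⁰` be the restriction of `S*` to `ker Γ₁`. Green's identity makes `H⁰` symmetric, so
`|Im z| ‖χ‖ ≤ ‖(S* - z) χ‖` on `ker Γ₁`; together with the closedness of `S*` this shows that
`H⁰ - z` is injective with closed range for non-real `z`. A vector orthogonal to that range is an
eigenvector of `S*` at `z̄`, and Green's identity together with the surjectivity of `(Γ₁, Γ₂)`
puts it in `ker Γ₁`, so it vanishes: `H⁰ - z` is onto. Hence `N_z ∩ ker Γ₁ = 0`, and any `ψ` with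
`Γ₁ ψ = ξ` becomes an element of `N_z` after subtracting the `χ ∈ ker Γ₁` with
`(S* - z) χ = (S* - z) ψ`.
-/

open ContinuousLinearMap

variable {H : Type*} [NormedAddCommGroup H] [InnerProductSpace ℂ H] [CompleteSpace H]
variable {G : Type*} [NormedAddCommGroup G] [InnerProductSpace ℂ G] [CompleteSpace G]

/-- The operator `M^{A,B}` on `G × G`, `(x₁,x₂) ↦ (A x₁ - B x₂, B x₁ + A x₂)`. -/
noncomputable def MAB (A B : G →L[ℂ] G) : (G × G) →L[ℂ] (G × G) :=
  ((A.comp (fst ℂ G G)) - (B.comp (snd ℂ G G))).prod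
    ((B.comp (fst ℂ G G)) + (A.comp (snd ℂ G G)))

/-- A bounded operator is boundedly invertible if it has a bounded two-sided inverse. -/
def IsBoundedlyInvertible {E F : Type*} [NormedAddCommGroup E] [NormedSpace ℂ E]
    [NormedAddCommGroup F] [NormedSpace ℂ F] (T : E →L[ℂ] F) : Prop :=
  ∃ T' : F →L[ℂ] E, (∀ x, T' (T x) = x) ∧ (∀ y, T (T' y) = y)

/-- A densely defined operator is symmetric if `⟪Sφ, ψ⟫ = ⟪φ, Sψ⟫` on its domain. -/
def IsSymmetricPMap (S : H →ₗ.[ℂ] H) : Prop :=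
  ∀ φ ψ : S.domain, (inner ℂ (S φ) (ψ : H) : ℂ) = inner ℂ (φ : H) (S ψ)

/-- A boundary triple `(G, Γ₁, Γ₂)` for a symmetric operator `S`: two boundary maps
on `dom S*` satisfying the abstract Green identity and joint surjectivity. -/
structure BoundaryTriple (S : H →ₗ.[ℂ] H) (G : Type*) [NormedAddCommGroup G]
    [InnerProductSpace ℂ G] [CompleteSpace G] where
  Γ₁ : S.adjoint.domain →ₗ[ℂ] G
  Γ₂ : S.adjoint.domain →ₗ[ℂ] G
  green : ∀ φ ψ : S.adjoint.domain,
    (inner ℂ (φ : H) (S.adjoint ψ) : ℂ) - inner ℂ (S.adjoint φ) (ψ : H)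
      = (inner ℂ (Γ₁ φ) (Γ₂ ψ) : ℂ) - inner ℂ (Γ₂ φ) (Γ₁ ψ)
  surj : Function.Surjective fun φ : S.adjoint.domain => (Γ₁ φ, Γ₂ φ)

/-- The restriction of a partially defined operator `T` to a submodule `K` of its domain. -/
noncomputable def pmapRestrict (T : H →ₗ.[ℂ] H) (K : Submodule ℂ T.domain) : H →ₗ.[ℂ] H where
  domain := K.map T.domain.subtype
  toFun := (T.toFun.comp K.subtype).comp
    (Submodule.equivMapOfInjective T.domain.subtype
      (Submodule.injective_subtype T.domain) K).symm.toLinearMap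

/-- The distinguished extension `H⁰`: the restriction of `S*` to `ker Γ₁`. -/
noncomputable def H0 (S : H →ₗ.[ℂ] H) (BT : BoundaryTriple S G) : H →ₗ.[ℂ] H :=
  pmapRestrict S.adjoint (LinearMap.ker BT.Γ₁)

/-- The extension `H^{A,B}`: the restriction of `S*` to `{φ : A Γ₁ φ = B Γ₂ φ}`. -/
noncomputable def HAB (S : H →ₗ.[ℂ] H) (BT : BoundaryTriple S G) (A B : G →L[ℂ] G) :
    H →ₗ.[ℂ] H :=
  pmapRestrict S.adjoint
    (LinearMap.ker ((A.toLinearMap.comp BT.Γ₁) - (B.toLinearMap.comp BT.Γ₂)))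

/-- `R` is the resolvent of `T` at `z`: a bounded, everywhere defined two-sided inverse
of `T - z`. -/
def IsResolventOf (T : H →ₗ.[ℂ] H) (z : ℂ) (R : H →L[ℂ] H) : Prop :=
  (∀ f : H, ∃ φ : T.domain, (φ : H) = R f ∧ T φ - z • (φ : H) = f) ∧
  (∀ φ : T.domain, R (T φ - z • (φ : H)) = φ)

/-- `z` is in the resolvent set of `T`. -/
def InResolventSet (T : H →ₗ.[ℂ] H) (z : ℂ) : Prop := ∃ R, IsResolventOf T z R

/-- `γz` is the `Γ`-field at `z`: the inverse of `Γ₁` restricted to the deficiency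
space `N_z = ker (S* - z)`. -/
def IsGammaField (S : H →ₗ.[ℂ] H) (BT : BoundaryTriple S G) (z : ℂ) (γz : G →L[ℂ] H) : Prop :=
  (∀ ξ : G, ∃ φ : S.adjoint.domain, (φ : H) = γz ξ ∧ S.adjoint φ = z • (φ : H) ∧ BT.Γ₁ φ = ξ) ∧
  (∀ φ : S.adjoint.domain, S.adjoint φ = z • (φ : H) → γz (BT.Γ₁ φ) = (φ : H))

/-- `Qz` is the `Q`-function (Weyl function) at `z`: `Qz = Γ₂ ∘ γz`. -/
def IsQFunction (S : H →ₗ.[ℂ] H) (BT : BoundaryTriple S G) (z : ℂ)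
    (γz : G →L[ℂ] H) (Qz : G →L[ℂ] G) : Prop :=
  IsGammaField S BT z γz ∧
    ∀ φ : S.adjoint.domain, S.adjoint φ = z • (φ : H) → Qz (BT.Γ₁ φ) = BT.Γ₂ φ

open Filter Topology
open scoped InnerProductSpace ComplexConjugate

theorem abs_im_mul_norm_le_norm_sub_smul {E : Type*} [NormedAddCommGroup E]
    [InnerProductSpace ℂ E] {x y : E} (h : ⟪x, y⟫_ℂ = ⟪y, x⟫_ℂ) (w : ℂ) :
    |w.im| * ‖x‖ ≤ ‖y - w • x‖ := by
  have him : (⟪x, y⟫_ℂ).im = 0 := by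
    rw [← Complex.conj_eq_iff_im, inner_conj_symm, h]
  have hc : (⟪x, y - w • x⟫_ℂ).im = -(w.im * ‖x‖ ^ 2) := by
    rw [inner_sub_right, inner_smul_right, inner_self_eq_norm_sq_to_K]
    simp [him, ← Complex.ofReal_pow]
  rcases (norm_nonneg x).eq_or_lt with hx | hx
  · rw [← hx, mul_zero]
    exact norm_nonneg _
  refine le_of_mul_le_mul_left ?_ hx
  calc ‖x‖ * (|w.im| * ‖x‖) = |(⟪x, y - w • x⟫_ℂ).im| := by
        rw [hc, abs_neg, abs_mul, abs_of_nonneg (sq_nonneg ‖x‖)]; ring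
    _ ≤ ‖⟪x, y - w • x⟫_ℂ‖ := Complex.abs_im_le_norm _
    _ ≤ ‖x‖ * ‖y - w • x‖ := norm_inner_le_norm _ _

namespace BoundaryTriple

variable {S : H →ₗ.[ℂ] H} (BT : BoundaryTriple S G)

theorem inner_adjoint_eq_of_Γ₁_eq_zero {φ χ : S.adjoint.domain} (hφ : BT.Γ₁ φ = 0)
    (hχ : BT.Γ₁ χ = 0) : ⟪(φ : H), S.adjoint χ⟫_ℂ = ⟪S.adjoint φ, (χ : H)⟫_ℂ := by
  simpa [hφ, hχ, sub_eq_zero] using BT.green φ χ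

theorem abs_im_mul_norm_le {χ : S.adjoint.domain} (hχ : BT.Γ₁ χ = 0) (w : ℂ) :
    |w.im| * ‖(χ : H)‖ ≤ ‖S.adjoint χ - w • (χ : H)‖ :=
  abs_im_mul_norm_le_norm_sub_smul (BT.inner_adjoint_eq_of_Γ₁_eq_zero hχ hχ) w

theorem eq_zero_of_adjoint_eq_smul {χ : S.adjoint.domain} (hχ : BT.Γ₁ χ = 0) {w : ℂ}
    (hw : w.im ≠ 0) (h : S.adjoint χ = w • (χ : H)) : χ = 0 := by
  have := BT.abs_im_mul_norm_le hχ w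
  rw [h, sub_self, norm_zero] at this
  have hχ0 : ‖(χ : H)‖ ≤ 0 := by nlinarith [abs_pos.mpr hw, norm_nonneg (χ : H)]
  exact_mod_cast norm_le_zero_iff.mp hχ0

-- Choosing `χ` with `(Γ₁ χ, Γ₂ χ) = (0, Γ₁ φ)`, Green's identity reads `0 = ‖Γ₁ φ‖²`.
theorem Γ₁_eq_zero_of_forall_inner_adjoint_eq {φ : S.adjoint.domain}
    (h : ∀ χ : S.adjoint.domain, BT.Γ₁ χ = 0 →
      ⟪(φ : H), S.adjoint χ⟫_ℂ = ⟪S.adjoint φ, (χ : H)⟫_ℂ) :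
    BT.Γ₁ φ = 0 := by
  obtain ⟨χ, hχ⟩ := BT.surj (0, BT.Γ₁ φ)
  have hχ₁ : BT.Γ₁ χ = 0 := congrArg Prod.fst hχ
  have hχ₂ : BT.Γ₂ χ = BT.Γ₁ φ := congrArg Prod.snd hχ
  have hgreen := BT.green φ χ
  rw [h χ hχ₁, sub_self, hχ₁, hχ₂, inner_zero_right, sub_zero] at hgreen
  exact inner_self_eq_zero.mp hgreen.symm

theorem Γ₁_eq_zero_of_mem_domain (hdense : Dense (S.domain : Set H))
    (hsymm : IsSymmetricPMap S) {φ : S.adjoint.domain} (hφ : (φ : H) ∈ S.domain) :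
    BT.Γ₁ φ = 0 := by
  have hSφ : S.adjoint φ = S ⟨φ, hφ⟩ :=
    ((LinearPMap.IsFormalAdjoint.le_adjoint hdense hsymm).2 rfl).symm
  refine BT.Γ₁_eq_zero_of_forall_inner_adjoint_eq fun χ _ => ?_
  rw [← inner_conj_symm (φ : H), LinearPMap.adjoint_isFormalAdjoint hdense χ ⟨φ, hφ⟩,
    inner_conj_symm, hSφ]

-- The range of `H⁰ - z`, where `H⁰` is the restriction of `S*` to `ker Γ₁`.
noncomputable def range₀ (z : ℂ) : Submodule ℂ H :=
  (LinearMap.ker BT.Γ₁).map (S.adjoint.toFun - z • S.adjoint.domain.subtype)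

theorem mem_range₀ {z : ℂ} {f : H} :
    f ∈ BT.range₀ z ↔ ∃ χ : S.adjoint.domain, BT.Γ₁ χ = 0 ∧ S.adjoint χ - z • (χ : H) = f :=
  Iff.rfl

theorem exists_Γ₁_eq_zero_of_tendsto (hdense : Dense (S.domain : Set H))
    {χ : ℕ → S.adjoint.domain} (hχ : ∀ n, BT.Γ₁ (χ n) = 0) {x y : H}
    (hx : Tendsto (fun n => (χ n : H)) atTop (𝓝 x))
    (hy : Tendsto (fun n => S.adjoint (χ n)) atTop (𝓝 y)) :
    ∃ X : S.adjoint.domain, (X : H) = x ∧ S.adjoint X = y ∧ BT.Γ₁ X = 0 := by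
  have hgraph : (x, y) ∈ S.adjoint.graph :=
    _root_.IsClosed.mem_of_tendsto (LinearPMap.adjoint_isClosed hdense) (hx.prodMk_nhds hy)
      (Eventually.of_forall fun n => S.adjoint.mem_graph (χ n))
  obtain ⟨X, rfl, rfl⟩ := S.adjoint.mem_graph_iff.mp hgraph
  refine ⟨X, rfl, rfl, BT.Γ₁_eq_zero_of_forall_inner_adjoint_eq fun ψ hψ => ?_⟩
  exact tendsto_nhds_unique
    ((hx.inner tendsto_const_nhds).congr fun n => BT.inner_adjoint_eq_of_Γ₁_eq_zero (hχ n) hψ)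
    (hy.inner tendsto_const_nhds)

theorem isClosed_range₀ (hdense : Dense (S.domain : Set H)) {z : ℂ} (hz : z.im ≠ 0) :
    IsClosed (BT.range₀ z : Set H) := by
  refine IsSeqClosed.isClosed fun f g hf hfg => ?_
  choose χ hχ hχf using fun n => BT.mem_range₀.mp (hf n)
  have hz' : 0 < |z.im| := abs_pos.mpr hz
  have hcauchy : CauchySeq fun n => (χ n : H) := by
    refine Metric.cauchySeq_iff.mpr fun ε hε => ?_
    obtain ⟨N, hN⟩ := Metric.cauchySeq_iff.mp hfg.cauchySeq (|z.im| * ε) (by positivity)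
    refine ⟨N, fun m hm n hn => ?_⟩
    have hbound := BT.abs_im_mul_norm_le (χ := χ m - χ n)
      (by rw [map_sub, hχ m, hχ n, sub_zero]) z
    rw [LinearPMap.map_sub, Submodule.coe_sub, smul_sub, sub_sub_sub_comm, hχf m, hχf n,
      ← dist_eq_norm, ← dist_eq_norm] at hbound
    exact lt_of_mul_lt_mul_left (hbound.trans_lt (hN m hm n hn)) hz'.le
  obtain ⟨x, hx⟩ := cauchySeq_tendsto_of_complete hcauchy
  have hy : Tendsto (fun n => S.adjoint (χ n)) atTop (𝓝 (g + z • x)) := by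
    simpa only [← hχf, sub_add_cancel] using hfg.add (hx.const_smul z)
  obtain ⟨X, rfl, hX, hX₀⟩ := BT.exists_Γ₁_eq_zero_of_tendsto hdense hχ hx hy
  exact BT.mem_range₀.mpr ⟨X, hX₀, by rw [hX, add_sub_cancel_right]⟩

theorem exists_of_mem_range₀_orthogonal (hdense : Dense (S.domain : Set H))
    (hsymm : IsSymmetricPMap S) {z : ℂ} {f : H} (hf : f ∈ (BT.range₀ z)ᗮ) :
    ∃ F : S.adjoint.domain, (F : H) = f ∧ S.adjoint F = conj z • f ∧ BT.Γ₁ F = 0 := by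
  have hperp : ∀ χ : S.adjoint.domain, BT.Γ₁ χ = 0 →
      ⟪f, S.adjoint χ⟫_ℂ = ⟪conj z • f, (χ : H)⟫_ℂ := by
    intro χ hχ
    have h0 := Submodule.inner_left_of_mem_orthogonal (BT.mem_range₀.mpr ⟨χ, hχ, rfl⟩) hf
    rwa [inner_sub_right, inner_smul_right, sub_eq_zero, ← Complex.conj_conj z,
      ← inner_smul_left] at h0
  have hSle := LinearPMap.IsFormalAdjoint.le_adjoint hdense hsymm
  have hS : ∀ u : S.domain, ⟪conj z • f, (u : H)⟫_ℂ = ⟪f, S u⟫_ℂ := fun u => by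
    have hu : (u : H) ∈ S.adjoint.domain := hSle.1 u.2
    rw [hSle.2 (x := u) (y := ⟨u, hu⟩) rfl]
    exact (hperp ⟨u, hu⟩ (BT.Γ₁_eq_zero_of_mem_domain hdense hsymm u.2)).symm
  let F : S.adjoint.domain := ⟨f, LinearPMap.mem_adjoint_domain_of_exists f ⟨_, hS⟩⟩
  have hF : S.adjoint F = conj z • f := LinearPMap.adjoint_apply_eq hdense F hS
  refine ⟨F, rfl, hF, BT.Γ₁_eq_zero_of_forall_inner_adjoint_eq fun χ hχ => ?_⟩
  rw [hF]
  exact hperp χ hχ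

theorem range₀_eq_top (hdense : Dense (S.domain : Set H)) (hsymm : IsSymmetricPMap S) {z : ℂ}
    (hz : z.im ≠ 0) : BT.range₀ z = ⊤ := by
  have : CompleteSpace (BT.range₀ z) := (BT.isClosed_range₀ hdense hz).completeSpace_coe
  refine Submodule.orthogonal_eq_bot_iff.mp ((Submodule.eq_bot_iff _).mpr fun f hf => ?_)
  obtain ⟨F, rfl, hF, hF₀⟩ := BT.exists_of_mem_range₀_orthogonal hdense hsymm hf
  have hz' : (conj z).im ≠ 0 := by rwa [Complex.conj_im, neg_ne_zero]
  rw [BT.eq_zero_of_adjoint_eq_smul hF₀ hz' hF, ZeroMemClass.coe_zero]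

end BoundaryTriple

theorem gamma1_restricted_bijective (S : H →ₗ.[ℂ] H)
    (hdense : Dense (S.domain : Set H)) (hsymm : IsSymmetricPMap S)
    (BT : BoundaryTriple S G) (z : ℂ) (hz : z.im ≠ 0) :
    Function.Bijective
      (fun φ : {φ : S.adjoint.domain // S.adjoint φ = z • (φ : H)} => BT.Γ₁ φ.1) := by
  refine ⟨fun φ ψ h => ?_, fun ξ => ?_⟩
  · have hker : BT.Γ₁ (φ.1 - ψ.1) = 0 := by rw [map_sub]; exact sub_eq_zero.mpr h
    have heig : S.adjoint (φ.1 - ψ.1) = z • ((φ.1 - ψ.1 : S.adjoint.domain) : H) := by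
      rw [LinearPMap.map_sub, φ.2, ψ.2, Submodule.coe_sub, smul_sub]
    exact Subtype.ext (sub_eq_zero.mp (BT.eq_zero_of_adjoint_eq_smul hker hz heig))
  · obtain ⟨ψ, hψ⟩ := BT.surj (ξ, 0)
    have hmem : S.adjoint ψ - z • (ψ : H) ∈ BT.range₀ z := by
      rw [BT.range₀_eq_top hdense hsymm hz]; exact Submodule.mem_top
    obtain ⟨χ, hχ, hχψ⟩ := BT.mem_range₀.mp hmem
    refine ⟨⟨ψ - χ, ?_⟩, ?_⟩
    · rw [LinearPMap.map_sub, Submodule.coe_sub, smul_sub, sub_eq_sub_iff_sub_eq_sub, hχψ]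
    · change BT.Γ₁ (ψ - χ) = ξ
      rw [map_sub, hχ, sub_zero]
      exact congrArg Prod.fst hψ
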